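/- arXiv:2005.08060 — 3 statements merged into one kernel-verified Lean document; each statement's English description precedes it below -/
import Mathlib

section
/- Fix β: V → (0,1] and a monotone submodular set function σ: 2^V → R_{≥0}. The multilinear-type extension μ(x) = E[σ(S)] where each u ∈ V is included in S independently with probability 1−(1−β_u)^{x(u)} is dr-submodular on Z_+^V: μ(x+e_u) − μ(x) ≥ μ(y+e_u) − μ(y) for all x ≤ y and all u ∈ V. -/
open Finset

/-- The expected influence spread `μ(x)` over a random seed set where each node `u` is
included independently with probability `1 - (1 - β u) ^ (x u)`. -/
noncomputable def mu {V : Type*} [Fintype V] [DecidableEq V]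
    (σ : Finset V → ℝ) (β : V → ℝ) (x : V → ℕ) : ℝ :=
  ∑ S ∈ Finset.univ.powerset,
    σ S * (∏ u ∈ S, (1 - (1 - β u) ^ (x u))) * ∏ u ∈ Finset.univ \ S, (1 - β u) ^ (x u)

noncomputable def Fext {V : Type*} [DecidableEq V]
    (U : Finset V) (f : Finset V → ℝ) (p : V → ℝ) : ℝ :=
  ∑ S ∈ U.powerset, f S * (∏ v ∈ S, p v) * ∏ v ∈ U \ S, (1 - p v)

lemma Fext_pivot {V : Type*} [DecidableEq V] (U : Finset V) (u : V) (hu : u ∉ U)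
    (f : Finset V → ℝ) (p : V → ℝ) :
    Fext (insert u U) f p =
      p u * Fext U (fun S => f (insert u S)) p + (1 - p u) * Fext U f p := by
  unfold Fext
  rw [Finset.sum_powerset_insert hu]
  have h1 : ∑ S ∈ U.powerset, f S * (∏ v ∈ S, p v) * ∏ v ∈ insert u U \ S, (1 - p v)
      = (1 - p u) * ∑ S ∈ U.powerset, f S * (∏ v ∈ S, p v) * ∏ v ∈ U \ S, (1 - p v) := by
    rw [Finset.mul_sum]
    refine Finset.sum_congr rfl ?_
    intro S hS
    rw [Finset.mem_powerset] at hS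
    have huS : u ∉ S := fun h => hu (hS h)
    have hd : insert u U \ S = insert u (U \ S) := by
      ext v
      simp only [Finset.mem_sdiff, Finset.mem_insert]
      constructor
      · rintro ⟨h | h, h2⟩
        · exact Or.inl h
        · exact Or.inr ⟨h, h2⟩
      · rintro (h | ⟨ha, hb⟩)
        · exact ⟨Or.inl h, h ▸ huS⟩
        · exact ⟨Or.inr ha, hb⟩
    rw [hd, Finset.prod_insert (by simp [hu])]
    ring
  have h2 : ∑ S ∈ U.powerset,
        f (insert u S) * (∏ v ∈ insert u S, p v) * ∏ v ∈ insert u U \ insert u S, (1 - p v)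
      = p u * ∑ S ∈ U.powerset,
          f (insert u S) * (∏ v ∈ S, p v) * ∏ v ∈ U \ S, (1 - p v) := by
    rw [Finset.mul_sum]
    refine Finset.sum_congr rfl ?_
    intro S hS
    rw [Finset.mem_powerset] at hS
    have huS : u ∉ S := fun h => hu (hS h)
    have hd : insert u U \ insert u S = U \ S := by
      ext v
      simp only [Finset.mem_sdiff, Finset.mem_insert]
      constructor
      · rintro ⟨h | h, h2⟩
        · exact absurd (Or.inl h) h2
        · exact ⟨h, fun hv => h2 (Or.inr hv)⟩
      · rintro ⟨ha, hb⟩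
        refine ⟨Or.inr ha, ?_⟩
        rintro (rfl | hv)
        · exact hu ha
        · exact hb hv
    rw [hd, Finset.prod_insert huS]
    ring
  rw [h1, h2]
  ring

lemma Fext_congr {V : Type*} [DecidableEq V] (U : Finset V) (f : Finset V → ℝ)
    (p q : V → ℝ) (h : ∀ v ∈ U, p v = q v) : Fext U f p = Fext U f q := by
  unfold Fext
  refine Finset.sum_congr rfl ?_
  intro S hS
  rw [Finset.mem_powerset] at hS
  have e1 : ∏ v ∈ S, p v = ∏ v ∈ S, q v :=
    Finset.prod_congr rfl fun v hv => h v (hS hv)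
  have e2 : ∏ v ∈ U \ S, (1 - p v) = ∏ v ∈ U \ S, (1 - q v) :=
    Finset.prod_congr rfl fun v hv => by rw [h v (Finset.mem_sdiff.mp hv).1]
  rw [e1, e2]

lemma Fext_sub {V : Type*} [DecidableEq V] (U : Finset V) (f g : Finset V → ℝ)
    (p : V → ℝ) : Fext U (fun S => f S - g S) p = Fext U f p - Fext U g p := by
  unfold Fext
  rw [← Finset.sum_sub_distrib]
  exact Finset.sum_congr rfl fun S _ => by ring

lemma weight_nonneg {V : Type*} [DecidableEq V] {U S : Finset V} (hS : S ⊆ U)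
    {p : V → ℝ} (hp : ∀ v ∈ U, 0 ≤ p v ∧ p v ≤ 1) :
    0 ≤ (∏ v ∈ S, p v) * ∏ v ∈ U \ S, (1 - p v) := by
  apply mul_nonneg
  · exact Finset.prod_nonneg fun v hv => (hp v (hS hv)).1
  · exact Finset.prod_nonneg fun v hv => by
      have := (hp v (Finset.mem_sdiff.mp hv).1).2; linarith

lemma Fext_le_Fext {V : Type*} [DecidableEq V] (U : Finset V) (f g : Finset V → ℝ)
    (p : V → ℝ) (hp : ∀ v ∈ U, 0 ≤ p v ∧ p v ≤ 1)
    (hfg : ∀ S ⊆ U, f S ≤ g S) : Fext U f p ≤ Fext U g p := by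
  unfold Fext
  refine Finset.sum_le_sum ?_
  intro S hS
  rw [Finset.mem_powerset] at hS
  rw [mul_assoc, mul_assoc]
  exact mul_le_mul_of_nonneg_right (hfg S hS) (weight_nonneg hS hp)

lemma Fext_nonneg {V : Type*} [DecidableEq V] (U : Finset V) (g : Finset V → ℝ)
    (p : V → ℝ) (hp : ∀ v ∈ U, 0 ≤ p v ∧ p v ≤ 1)
    (hg : ∀ S ⊆ U, 0 ≤ g S) : 0 ≤ Fext U g p := by
  have := Fext_le_Fext U (fun _ => 0) g p hp (fun S hS => hg S hS)
  simpa [Fext] using this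

lemma Fext_anti {V : Type*} [DecidableEq V] (p q : V → ℝ) (U : Finset V) :
    ∀ g : Finset V → ℝ,
      (∀ S T : Finset V, S ⊆ T → T ⊆ U → g T ≤ g S) →
      (∀ v ∈ U, 0 ≤ p v ∧ p v ≤ 1) → (∀ v ∈ U, 0 ≤ q v ∧ q v ≤ 1) →
      (∀ v ∈ U, p v ≤ q v) → Fext U g q ≤ Fext U g p := by
  induction U using Finset.induction_on with
  | empty => intro g _ _ _ _; simp [Fext]
  | @insert a U ha ih =>
    intro g hg hp hq hpq
    rw [Fext_pivot U a ha, Fext_pivot U a ha]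
    have hUsub : U ⊆ insert a U := Finset.subset_insert a U
    have hp' : ∀ v ∈ U, 0 ≤ p v ∧ p v ≤ 1 := fun v hv => hp v (hUsub hv)
    have hq' : ∀ v ∈ U, 0 ≤ q v ∧ q v ≤ 1 := fun v hv => hq v (hUsub hv)
    have hpq' : ∀ v ∈ U, p v ≤ q v := fun v hv => hpq v (hUsub hv)
    have hA : Fext U (fun S => g (insert a S)) q ≤ Fext U (fun S => g (insert a S)) p := by
      refine ih _ ?_ hp' hq' hpq'
      intro S T hST hTU
      exact hg (insert a S) (insert a T) (Finset.insert_subset_insert a hST)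
        (Finset.insert_subset_insert a hTU)
    have hB : Fext U g q ≤ Fext U g p := by
      refine ih _ ?_ hp' hq' hpq'
      intro S T hST hTU
      exact hg S T hST (hTU.trans hUsub)
    have hAB : Fext U (fun S => g (insert a S)) q ≤ Fext U g q := by
      refine Fext_le_Fext U _ _ q hq' ?_
      intro S hS
      exact hg S (insert a S) (Finset.subset_insert a S)
        (Finset.insert_subset_insert a hS)
    have h0p : 0 ≤ p a := (hp a (Finset.mem_insert_self a U)).1
    have hpq0 : p a ≤ q a := hpq a (Finset.mem_insert_self a U)
    have hq1 : q a ≤ 1 := (hq a (Finset.mem_insert_self a U)).2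
    nlinarith [mul_nonneg h0p (sub_nonneg.mpr hA),
      mul_nonneg (sub_nonneg.mpr hpq0) (sub_nonneg.mpr hAB)]

lemma mu_eq_Fext {V : Type*} [Fintype V] [DecidableEq V]
    (σ : Finset V → ℝ) (β : V → ℝ) (x : V → ℕ) :
    mu σ β x = Fext Finset.univ σ (fun v => 1 - (1 - β v) ^ (x v)) := by
  unfold mu Fext
  refine Finset.sum_congr rfl fun S _ => ?_
  congr 1
  exact Finset.prod_congr rfl fun v _ => by ring

lemma mu_marginal {V : Type*} [Fintype V] [DecidableEq V]
    (σ : Finset V → ℝ) (β : V → ℝ) (x : V → ℕ) (u : V) :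
    mu σ β (x + fun v => if v = u then 1 else 0) - mu σ β x
      = β u * (1 - β u) ^ (x u) *
        Fext (Finset.univ.erase u) (fun S => σ (insert u S) - σ S)
          (fun v => 1 - (1 - β v) ^ (x v)) := by
  classical
  have hU : insert u (Finset.univ.erase u) = (Finset.univ : Finset V) :=
    Finset.insert_erase (Finset.mem_univ u)
  have hunotin : u ∉ Finset.univ.erase u := Finset.notMem_erase u _
  set p : V → ℝ := fun v => 1 - (1 - β v) ^ (x v) with hpdef
  set q : V → ℝ := fun v => 1 - (1 - β v) ^ (x v + if v = u then 1 else 0) with hqdef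
  have hx : mu σ β x = p u * Fext (Finset.univ.erase u) (fun S => σ (insert u S)) p
      + (1 - p u) * Fext (Finset.univ.erase u) σ p := by
    have h := Fext_pivot (Finset.univ.erase u) u hunotin σ p
    rw [hU] at h
    rw [mu_eq_Fext]
    exact h
  have hagree : ∀ v ∈ Finset.univ.erase u, q v = p v := by
    intro v hv
    have hvu : v ≠ u := Finset.ne_of_mem_erase hv
    simp [hqdef, hpdef, hvu]
  have hx' : mu σ β (x + fun v => if v = u then 1 else 0)
      = q u * Fext (Finset.univ.erase u) (fun S => σ (insert u S)) p
      + (1 - q u) * Fext (Finset.univ.erase u) σ p := by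
    have h := Fext_pivot (Finset.univ.erase u) u hunotin σ q
    rw [hU] at h
    rw [Fext_congr _ _ q p hagree, Fext_congr _ σ q p hagree] at h
    rw [mu_eq_Fext]
    exact h
  rw [hx, hx', Fext_sub]
  simp only [hpdef, hqdef, eq_self_iff_true, if_true, pow_succ, pow_one]
  ring

theorem mu_dr_submodular {V : Type*} [Fintype V] [DecidableEq V]
    (σ : Finset V → ℝ) (β : V → ℝ)
    (hβ : ∀ u, 0 < β u ∧ β u ≤ 1)
    (hσ0 : ∀ S, 0 ≤ σ S)
    (hmono : ∀ S T : Finset V, S ⊆ T → σ S ≤ σ T)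
    (hsub : ∀ S T : Finset V, σ (S ∪ T) + σ (S ∩ T) ≤ σ S + σ T) :
    ∀ x y : V → ℕ, x ≤ y → ∀ u : V,
      mu σ β (y + fun v => if v = u then 1 else 0) - mu σ β y ≤
      mu σ β (x + fun v => if v = u then 1 else 0) - mu σ β x := by
  intro x y hxy u
  rw [mu_marginal, mu_marginal]
  set g : Finset V → ℝ := fun S => σ (insert u S) - σ S with hgdef
  have hbase : ∀ v, 0 ≤ 1 - β v ∧ 1 - β v ≤ 1 := by
    intro v; have := hβ v; constructor <;> linarith [this.1, this.2]
  have hpbound : ∀ (z : V → ℕ) v, 0 ≤ 1 - (1 - β v) ^ (z v) ∧ 1 - (1 - β v) ^ (z v) ≤ 1 := by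
    intro z v
    have h0 := (hbase v).1
    have h1 := (hbase v).2
    have hpow0 : 0 ≤ (1 - β v) ^ (z v) := pow_nonneg h0 _
    have hpow1 : (1 - β v) ^ (z v) ≤ 1 := pow_le_one₀ h0 h1
    constructor <;> linarith
  have hganti : ∀ S T : Finset V, S ⊆ T → T ⊆ Finset.univ.erase u → g T ≤ g S := by
    intro S T hST hTU
    have huT : u ∉ T := fun h => (Finset.notMem_erase u _) (hTU h)
    have h1 : insert u S ∪ T = insert u T := by
      ext v; simp only [Finset.mem_union, Finset.mem_insert]
      constructor
      · rintro ((rfl | h) | h)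
        · exact Or.inl rfl
        · exact Or.inr (hST h)
        · exact Or.inr h
      · rintro (rfl | h)
        · exact Or.inl (Or.inl rfl)
        · exact Or.inr h
    have h2 : insert u S ∩ T = S := by
      ext v; simp only [Finset.mem_inter, Finset.mem_insert]
      constructor
      · rintro ⟨rfl | h, h2⟩
        · exact absurd h2 huT
        · exact h
      · intro h; exact ⟨Or.inr h, hST h⟩
    have := hsub (insert u S) T
    rw [h1, h2] at this
    simp only [hgdef]
    linarith
  have hgnonneg : ∀ S, S ⊆ Finset.univ.erase u → 0 ≤ g S := by
    intro S _
    simp only [hgdef]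
    linarith [hmono S (insert u S) (Finset.subset_insert u S)]
  have hpx := fun v (_ : v ∈ Finset.univ.erase u) => hpbound x v
  have hpy := fun v (_ : v ∈ Finset.univ.erase u) => hpbound y v
  have hDx : 0 ≤ Fext (Finset.univ.erase u) g (fun v => 1 - (1 - β v) ^ (x v)) :=
    Fext_nonneg _ _ _ hpx hgnonneg
  have hDy : 0 ≤ Fext (Finset.univ.erase u) g (fun v => 1 - (1 - β v) ^ (y v)) :=
    Fext_nonneg _ _ _ hpy hgnonneg
  have hD : Fext (Finset.univ.erase u) g (fun v => 1 - (1 - β v) ^ (y v)) ≤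
      Fext (Finset.univ.erase u) g (fun v => 1 - (1 - β v) ^ (x v)) := by
    refine Fext_anti _ _ _ g hganti hpx hpy ?_
    intro v _
    have := pow_le_pow_of_le_one (hbase v).1 (hbase v).2 (hxy v)
    linarith
  have hΔ : β u * (1 - β u) ^ (y u) ≤ β u * (1 - β u) ^ (x u) := by
    have := pow_le_pow_of_le_one (hbase u).1 (hbase u).2 (hxy u)
    exact mul_le_mul_of_nonneg_left this (le_of_lt (hβ u).1)
  have hΔy : 0 ≤ β u * (1 - β u) ^ (y u) :=
    mul_nonneg (le_of_lt (hβ u).1) (pow_nonneg (hbase u).1 _)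
  have hΔx : 0 ≤ β u * (1 - β u) ^ (x u) :=
    mul_nonneg (le_of_lt (hβ u).1) (pow_nonneg (hbase u).1 _)
  exact mul_le_mul hΔ hD hDy hΔx
end

section
/- Let f_opt ≥ 0 and let (g_i)_{i=0}^k be a nondecreasing nonnegative sequence with g_0 = 0 satisfying f_opt − g_i ≤ k·(g_{i+1} − g_i) for each 0 ≤ i < k. Then g_k ≥ (1 − e^{−1})·f_opt. -/
theorem greedy_recurrence_bound (k : ℕ) (hk : 1 ≤ k) (fopt : ℝ) (hfopt : 0 ≤ fopt)
    (g : ℕ → ℝ) (hg0 : g 0 = 0) (hgnonneg : ∀ i, 0 ≤ g i) (hgmono : Monotone g)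
    (hrec : ∀ i < k, fopt - g i ≤ (k : ℝ) * (g (i + 1) - g i)) :
    (1 - Real.exp (-1)) * fopt ≤ g k := by
  have hkpos : (0:ℝ) < k := by exact_mod_cast hk
  have hq0 : (0:ℝ) ≤ 1 - 1/k := by
    rw [sub_nonneg, div_le_one hkpos]; exact_mod_cast hk
  -- induction: fopt - g i ≤ (1 - 1/k)^i * fopt for i ≤ k
  have key : ∀ i, i ≤ k → fopt - g i ≤ (1 - 1/k)^i * fopt := by
    intro i
    induction i with
    | zero => intro _; simp [hg0]
    | succ n ih =>
      intro hn
      have hnk : n < k := hn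
      have h1 := hrec n hnk
      have ih' := ih (le_of_lt hnk)
      have step : fopt - g (n+1) ≤ (1 - 1/k) * (fopt - g n) := by
        have : (fopt - g n) / k ≤ g (n+1) - g n := by
          rw [div_le_iff₀ hkpos] at *
          linarith [h1]
        have hexp : (1 - 1/k) * (fopt - g n) = (fopt - g n) - (fopt - g n)/k := by
          field_simp
        rw [hexp]; linarith
      calc fopt - g (n+1) ≤ (1 - 1/k) * (fopt - g n) := step
        _ ≤ (1 - 1/k) * ((1 - 1/k)^n * fopt) := by
            exact mul_le_mul_of_nonneg_left ih' hq0
        _ = (1 - 1/k)^(n+1) * fopt := by ring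
  have hkey := key k le_rfl
  -- (1 - 1/k)^k ≤ exp(-1)
  have hpow : (1 - 1/(k:ℝ))^k ≤ Real.exp (-1) := by
    have h1 : (1 - 1/(k:ℝ)) ≤ Real.exp (-(1/k)) := by
      have := Real.add_one_le_exp (-(1/(k:ℝ)))
      linarith
    calc (1 - 1/(k:ℝ))^k ≤ (Real.exp (-(1/k)))^k := pow_le_pow_left₀ hq0 h1 k
      _ = Real.exp (-(1/k) * k) := by rw [← Real.exp_nat_mul]; ring_nf
      _ = Real.exp (-1) := by congr 1; field_simp
  have := mul_le_mul_of_nonneg_right hpow hfopt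
  nlinarith [hkey, this]
end

section
/- Let R be a random subset of a finite set V with |V| = n, chosen as follows: pick a uniformly random root v ∈ V and let R be the set of nodes that can reach v in a random subgraph g (sampled independently of v). Then for every fixed S ⊆ V, E_g[σ_g(S)] = n·Pr[R ∩ S ≠ ∅], where σ_g(S) is the number of nodes reachable from S in g. -/
open scoped Classical

/-- The number of nodes reachable from the set `S` along directed edges of `g`. -/
noncomputable def sigma {V : Type*} [Fintype V] (g : V → V → Prop) (S : Finset V) : ℕ :=
  (Finset.univ.filter (fun v => ∃ u ∈ S, Relation.ReflTransGen g u v)).card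

/-- RR-set identity: the expected influence spread of `S` equals `n` times the
probability that `S` intersects a random RR-set, where the RR-set consists of all
nodes reaching a uniformly random root `v` in a random subgraph `g ω`. -/
theorem rr_set_identity {V Ω : Type*} [Fintype V] [Fintype Ω]
    (n : ℕ) (hn : n = Fintype.card V) (hV : 0 < n)
    (Pr : Ω → ℝ) (hPr0 : ∀ ω, 0 ≤ Pr ω) (hPr1 : ∑ ω, Pr ω = 1)
    (g : Ω → V → V → Prop) (S : Finset V) :
    ∑ ω, Pr ω * (sigma (g ω) S : ℝ) =
      (n : ℝ) * ((1 / (n : ℝ)) * ∑ v : V, ∑ ω, Pr ω *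
        (if (S ∩ Finset.univ.filter (fun u => Relation.ReflTransGen (g ω) u v)).Nonempty
          then 1 else 0)) := by
  have hn0 : (n : ℝ) ≠ 0 := Nat.cast_ne_zero.mpr hV.ne'
  rw [← mul_assoc, mul_one_div_cancel hn0, one_mul, Finset.sum_comm]
  refine Finset.sum_congr rfl fun ω _ => ?_
  rw [← Finset.mul_sum]
  congr 1
  unfold sigma
  rw [Finset.card_eq_sum_ones, Nat.cast_sum, Finset.sum_filter]
  refine Finset.sum_congr rfl fun v _ => ?_
  have : (∃ u ∈ S, Relation.ReflTransGen (g ω) u v) ↔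
      (S ∩ Finset.univ.filter (fun u => Relation.ReflTransGen (g ω) u v)).Nonempty := by
    simp [Finset.Nonempty, Finset.mem_inter]
  simp only [this]
  split <;> simp
end
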